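/- Let V : ℝ³ → ℝ be a C¹ function and define the one-dimensional shift field V_i = V · δ_{i1} on ℝ³. Then at every point, II[K] = −((∂₂V)² + (∂₃V)²)/4 ≤ 0, where K_{ij} = −(∂_i V_j + ∂_j V_i)/2. Equivalently, II[K] = −Ω², where Ω² = (1/2) ∑_{i,j} Ω_{ij} Ω_{ij} is the squared magnitude of the coordinate vorticity Ω_{ij} = (∂_j V_i − ∂_i V_j)/2; hence the Eulerian energy density E = II[K]/(8πG) of the Natário warp drive with one-dimensional shift vector is everywhere nonpositive. -/
import Mathlib


open scoped BigOperators

/-- Partial derivative `∂ᵢ f` on `ℝ³ = Fin 3 → ℝ`. -/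
noncomputable def pd (i : Fin 3) (f : (Fin 3 → ℝ) → ℝ) (x : Fin 3 → ℝ) : ℝ :=
  fderiv ℝ f x (Pi.single i 1)

/-- Extrinsic curvature `K_{ij} = -(∂ᵢVⱼ + ∂ⱼVᵢ)/2` of the R-Warp model with shift `-V`. -/
noncomputable def Kmat (V : Fin 3 → (Fin 3 → ℝ) → ℝ) (x : Fin 3 → ℝ) (i j : Fin 3) : ℝ :=
  -(pd i (V j) x + pd j (V i) x) / 2

/-- Second principal invariant `II[B] = ((tr B)² - tr(B²))/2` of a 3×3 array. -/
noncomputable def II3 (B : Fin 3 → Fin 3 → ℝ) : ℝ :=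
  ((∑ i, B i i) ^ 2 - ∑ i, ∑ j, B i j * B j i) / 2

/-- The one-dimensional shift field `Vᵢ = V·δ_{i1}` (Lean index `0` is the first axis). -/
noncomputable def oneDShift (V : (Fin 3 → ℝ) → ℝ) : Fin 3 → (Fin 3 → ℝ) → ℝ :=
  fun i y => if i = 0 then V y else 0

/-- For the Natário warp drive with one-dimensional shift `Vᵢ = V δ_{i1}`:
`II[K] = -((∂₂V)² + (∂₃V)²)/4 = -Ω² ≤ 0`, where `Ω² = (1/2)∑ Ω_{ij}Ω_{ij}`; hence the
Eulerian energy density `E = II[K]/(8πG)` is everywhere nonpositive. -/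
theorem oneD_natario_energy_nonpositive
    (G : ℝ) (hG : 0 < G)
    (V : (Fin 3 → ℝ) → ℝ) (hV : ContDiff ℝ 1 V) (x : Fin 3 → ℝ) :
    II3 (Kmat (oneDShift V) x) = -((pd 1 V x) ^ 2 + (pd 2 V x) ^ 2) / 4 ∧
    II3 (Kmat (oneDShift V) x)
      = -((1:ℝ)/2) * ∑ i, ∑ j,
          ((pd j (oneDShift V i) x - pd i (oneDShift V j) x) / 2) ^ 2 ∧
    II3 (Kmat (oneDShift V) x) / (8 * Real.pi * G) ≤ 0 := by
  have h0 : ∀ i : Fin 3, i ≠ 0 → oneDShift V i = fun _ => (0:ℝ) := by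
    intro i hi; funext y; simp [oneDShift, hi]
  have h1 : oneDShift V 0 = V := by funext y; simp [oneDShift]
  have hz : ∀ i : Fin 3, pd i (fun _ => (0:ℝ)) x = 0 := by
    intro i; simp [pd]
  have key : II3 (Kmat (oneDShift V) x) = -((pd 1 V x) ^ 2 + (pd 2 V x) ^ 2) / 4 := by
    simp only [II3, Kmat, Fin.sum_univ_three, h1, h0 1 (by decide), h0 2 (by decide), hz]
    ring
  refine ⟨key, ?_, ?_⟩
  · rw [key]
    simp only [Fin.sum_univ_three, h1, h0 1 (by decide), h0 2 (by decide), hz]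
    ring
  · rw [key]
    apply div_nonpos_of_nonpos_of_nonneg
    · nlinarith [sq_nonneg (pd 1 V x), sq_nonneg (pd 2 V x)]
    · positivity
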